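/- arXiv:math/9709224 — 10 statements merged into one kernel-verified Lean document; each statement's English description precedes it below -/
import Mathlib

section
/- Let f(x) = x + (1/2)M(x)x be a quadratic map in standard form on ℝⁿ. If M(x)ⁿ = 0 for all x ∈ ℝⁿ, then f is injective. -/
open Matrix

/-- If each `M(x)` is nilpotent of order `n`, then the standard form quadratic map
`f(x) = x + (1/2) M(x) x` is injective. -/
theorem standard_form_injective (n : ℕ)
    (M : (Fin n → ℝ) → Matrix (Fin n) (Fin n) ℝ)
    (hlin : IsLinearMap ℝ M)
    (hsym : ∀ x y : Fin n → ℝ, M x *ᵥ y = M y *ᵥ x)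
    (hnil : ∀ x, (M x) ^ n = 0) :
    Function.Injective (fun x : Fin n → ℝ => x + (1 / 2 : ℝ) • (M x *ᵥ x)) := by
  intro x y h
  simp only at h
  -- key identity: M x *ᵥ x - M y *ᵥ y = M (x+y) *ᵥ (x-y)
  have key : M x *ᵥ x - M y *ᵥ y = M (x + y) *ᵥ (x - y) := by
    rw [hlin.map_add, Matrix.add_mulVec, Matrix.mulVec_sub, Matrix.mulVec_sub,
      hsym x y]
    abel
  set A : Matrix (Fin n) (Fin n) ℝ := 1 + (1 / 2 : ℝ) • M (x + y) with hA
  have hAu : IsUnit A := by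
    apply IsNilpotent.isUnit_one_add
    exact ⟨n, by rw [smul_pow, hnil, smul_zero]⟩
  have hAv : A *ᵥ (x - y) = 0 := by
    rw [hA, Matrix.add_mulVec, Matrix.one_mulVec, Matrix.smul_mulVec, ← key]
    have := sub_eq_zero.mpr h
    rw [add_sub_add_comm] at this
    rw [smul_sub]
    exact this
  have h0 : A *ᵥ (x - y) = A *ᵥ 0 := by rw [Matrix.mulVec_zero, hAv]
  exact sub_eq_zero.mp (Matrix.mulVec_injective_iff_isUnit.mpr hAu h0)
end

section
/- Let f(x) = x + (1/2)M(x)x be a quadratic map in standard form on ℝⁿ. If det(I + M(x)) = 1 for all x ∈ ℝⁿ, then M(x)ⁿ = 0 for all x; that is, each M(x) is nilpotent with characteristic polynomial ζⁿ. -/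
open Matrix Polynomial

namespace Matrix

variable {ι K : Type*} [Fintype ι] [DecidableEq ι] [Field K] [Infinite K]

/-- For `t ≠ 0`, `χ_A(t) = det (t • 1 - A) = tⁿ det (1 + (-t⁻¹) • A)`, so the hypothesis makes
`χ_A` agree with `Xⁿ` off `0`, hence everywhere. -/
theorem charpoly_eq_X_pow_of_det_one_add_smul {A : Matrix ι ι K}
    (h : ∀ t : K, (1 + t • A).det = 1) : A.charpoly = X ^ Fintype.card ι := by
  refine eq_of_infinite_eval_eq _ _ ((Set.finite_singleton 0).infinite_compl.mono fun t ht => ?_)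
  have hscalar : scalar ι t - A = t • (1 + (-t⁻¹) • A) := by
    rw [smul_add, smul_smul, mul_neg, mul_inv_cancel₀ ht, neg_one_smul, smul_one_eq_diagonal,
      ← sub_eq_add_neg, scalar_apply]
  rw [Set.mem_ofPred_eq, eval_charpoly, hscalar, det_smul, h, mul_one, eval_pow, eval_X]

theorem pow_card_eq_zero_of_det_one_add_smul {A : Matrix ι ι K}
    (h : ∀ t : K, (1 + t • A).det = 1) : A ^ Fintype.card ι = 0 := by
  simpa [charpoly_eq_X_pow_of_det_one_add_smul h] using aeval_self_charpoly A

end Matrix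

theorem det_one_implies_nilpotent_general (n : ℕ)
    (M : (Fin n → ℝ) → Matrix (Fin n) (Fin n) ℝ)
    (hlin : IsLinearMap ℝ M)
    (hdet : ∀ x : Fin n → ℝ, (1 + M x).det = 1) :
    ∀ x : Fin n → ℝ, (M x) ^ n = 0 := by
  intro x
  have h : ∀ t : ℝ, (1 + t • M x).det = 1 := fun t => hlin.map_smul t x ▸ hdet (t • x)
  simpa only [Fintype.card_fin] using pow_card_eq_zero_of_det_one_add_smul h

/-- If `det(I + M(x)) = 1` for all `x`, then each `M(x)` is nilpotent: `M(x)ⁿ = 0`. -/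
theorem det_one_implies_nilpotent (n : ℕ)
    (M : (Fin n → ℝ) → Matrix (Fin n) (Fin n) ℝ)
    (hlin : IsLinearMap ℝ M)
    (hsym : ∀ x y : Fin n → ℝ, M x *ᵥ y = M y *ᵥ x)
    (hdet : ∀ x : Fin n → ℝ, (1 + M x).det = 1) :
    ∀ x : Fin n → ℝ, (M x) ^ n = 0 :=
  det_one_implies_nilpotent_general n M hlin hdet
end

section
/- Let f(x) = x + (1/2)M(x)x be a bijective quadratic map in standard form on ℝⁿ whose inverse is a quadratic map g(x) = x + (1/2)N(x)x in standard form. Then N(x)x = −M(x)x and M(x)²x = 0 for all x. -/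
open Matrix

private lemma quad_poly_aux (a b c : ℝ) (h : ∀ t : ℝ, t ^ 2 * a + t ^ 3 * b + t ^ 4 * c = 0) :
    a = 0 ∧ b = 0 := by
  have h1 := h 1
  have h2 := h (-1)
  have h3 := h 2
  norm_num at h1 h2 h3
  constructor <;> linarith

/-- If a standard-form quadratic map has standard-form quadratic inverse, then
`N(x)x = -M(x)x` and `M(x)² x = 0`. -/
theorem quadratic_inverse_conditions (n : ℕ)
    (M N : (Fin n → ℝ) → Matrix (Fin n) (Fin n) ℝ)
    (hMlin : IsLinearMap ℝ M) (hNlin : IsLinearMap ℝ N)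
    (hMsym : ∀ x y : Fin n → ℝ, M x *ᵥ y = M y *ᵥ x)
    (hNsym : ∀ x y : Fin n → ℝ, N x *ᵥ y = N y *ᵥ x)
    (f g : (Fin n → ℝ) → Fin n → ℝ)
    (hf : ∀ x, f x = x + (1 / 2 : ℝ) • (M x *ᵥ x))
    (hg : ∀ x, g x = x + (1 / 2 : ℝ) • (N x *ᵥ x))
    (hBij : Function.Bijective f)
    (hgf : ∀ x, g (f x) = x) (hfg : ∀ x, f (g x) = x) :
    ∀ x : Fin n → ℝ, N x *ᵥ x = -(M x *ᵥ x) ∧ M x *ᵥ (M x *ᵥ x) = 0 := by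
  -- key identity coming from g ∘ f = id
  have key : ∀ x : Fin n → ℝ,
      (2 : ℝ)⁻¹ • (M x *ᵥ x + N x *ᵥ x) + (2 : ℝ)⁻¹ • (N x *ᵥ (M x *ᵥ x))
        + (8 : ℝ)⁻¹ • (N (M x *ᵥ x) *ᵥ (M x *ᵥ x)) = 0 := by
    intro x
    have h := hgf x
    rw [hf, hg] at h
    rw [hNlin.map_add, hNlin.map_smul] at h
    simp only [Matrix.add_mulVec, Matrix.mulVec_add, Matrix.smul_mulVec,
      Matrix.mulVec_smul] at h
    rw [hNsym (M x *ᵥ x) x] at h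
    linear_combination (norm := module) h
  -- substitute t • x
  have scale : ∀ (t : ℝ) (x : Fin n → ℝ),
      (t ^ 2) • ((2 : ℝ)⁻¹ • (M x *ᵥ x + N x *ᵥ x))
        + (t ^ 3) • ((2 : ℝ)⁻¹ • (N x *ᵥ (M x *ᵥ x)))
        + (t ^ 4) • ((8 : ℝ)⁻¹ • (N (M x *ᵥ x) *ᵥ (M x *ᵥ x))) = 0 := by
    intro t x
    have h := key (t • x)
    simp only [hMlin.map_smul, hNlin.map_smul, Matrix.smul_mulVec,
      Matrix.mulVec_smul, smul_smul, smul_add] at h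
    linear_combination (norm := module) h
  -- extract the degree-2 and degree-3 coefficients
  have hAB : ∀ x : Fin n → ℝ,
      M x *ᵥ x + N x *ᵥ x = 0 ∧ N x *ᵥ (M x *ᵥ x) = 0 := by
    intro x
    have hco : ∀ i : Fin n,
        ((2 : ℝ)⁻¹ • (M x *ᵥ x + N x *ᵥ x)) i = 0 ∧
        ((2 : ℝ)⁻¹ • (N x *ᵥ (M x *ᵥ x))) i = 0 := by
      intro i
      apply quad_poly_aux _ _ (((8 : ℝ)⁻¹ • (N (M x *ᵥ x) *ᵥ (M x *ᵥ x))) i)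
      intro t
      have h := congrFun (scale t x) i
      simp only [Pi.add_apply, Pi.smul_apply, Pi.zero_apply, smul_eq_mul] at h ⊢
      linear_combination h
    have hA : (2 : ℝ)⁻¹ • (M x *ᵥ x + N x *ᵥ x) = 0 := funext fun i => (hco i).1
    have hB : (2 : ℝ)⁻¹ • (N x *ᵥ (M x *ᵥ x)) = 0 := funext fun i => (hco i).2
    constructor
    · have := smul_eq_zero.mp hA
      simpa using this
    · have := smul_eq_zero.mp hB
      simpa using this
  -- polarization : N y *ᵥ z = - (M y *ᵥ z)
  have hpol : ∀ y z : Fin n → ℝ, N y *ᵥ z = -(M y *ᵥ z) := by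
    intro y z
    have h1 := (hAB (y + z)).1
    have h2 := (hAB y).1
    have h3 := (hAB z).1
    rw [hMlin.map_add, hNlin.map_add] at h1
    simp only [Matrix.add_mulVec, Matrix.mulVec_add] at h1
    rw [hMsym z y, hNsym z y] at h1
    have h4 : (2 : ℝ) • (M y *ᵥ z + N y *ᵥ z) = 0 := by
      linear_combination (norm := module) h1 - h2 - h3
    have h5 : M y *ᵥ z + N y *ᵥ z = 0 := by
      have := smul_eq_zero.mp h4
      simpa using this
    linear_combination (norm := module) h5
  intro x
  refine ⟨?_, ?_⟩
  · have h := (hAB x).1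
    linear_combination (norm := module) h
  · have h := (hAB x).2
    rw [hpol x (M x *ᵥ x)] at h
    exact neg_eq_zero.mp h
end

section
/- Let M : ℝⁿ → Mat(n,ℝ) be linear with M(x)y = M(y)x, satisfying M(x)M(y)z + M(y)M(z)x + M(z)M(x)y = 0 for all x,y,z. Define g_k(x) = x + (k/2)M(x)x for k ∈ ℤ. Then g_k ∘ g_l = g_{k+l} for all k, l ∈ ℤ; in particular the k-th iterate of f = g₁ is f^k(x) = x + (k/2)M(x)x. -/
open Matrix

/-- The family `g_k(x) = x + (k/2) M(x) x` satisfies `g_k ∘ g_l = g_{k+l}`;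
in particular the iterates of `f = g₁` are `f^k = g_k`. -/
theorem shear_group_property (n : ℕ)
    (M : (Fin n → ℝ) → Matrix (Fin n) (Fin n) ℝ)
    (hlin : IsLinearMap ℝ M)
    (hsym : ∀ x y : Fin n → ℝ, M x *ᵥ y = M y *ᵥ x)
    (hcyc : ∀ x y z : Fin n → ℝ,
      M x *ᵥ (M y *ᵥ z) + M y *ᵥ (M z *ᵥ x) + M z *ᵥ (M x *ᵥ y) = 0)
    (g : ℤ → (Fin n → ℝ) → Fin n → ℝ)
    (hgdef : ∀ (k : ℤ) (x : Fin n → ℝ), g k x = x + ((k : ℝ) / 2) • (M x *ᵥ x)) :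
    (∀ k l : ℤ, g k ∘ g l = g (k + l)) ∧
    (∀ m : ℕ, (g 1)^[m] = g (m : ℤ)) := by
  -- key lemma: M x (M x x) = 0
  have key : ∀ x : Fin n → ℝ, M x *ᵥ (M x *ᵥ x) = 0 := by
    intro x
    have h := hcyc x x x
    have h3 : (3 : ℝ) • (M x *ᵥ (M x *ᵥ x)) = 0 := by
      rw [show (3:ℝ) = 1+1+1 by norm_num, add_smul, add_smul, one_smul]
      linear_combination h
    have := smul_eq_zero.mp h3
    simpa using this
  have keyw : ∀ x : Fin n → ℝ,
      M (M x *ᵥ x) *ᵥ (M x *ᵥ x) = 0 := by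
    intro x
    set w := M x *ᵥ x with hw
    have hwx : M w *ᵥ x = 0 := by rw [← hsym]; exact key x
    have h := hcyc w x x
    rw [← hw] at h
    rw [hsym x w, hwx] at h
    simpa [hwx] using h
  have main : ∀ k l : ℤ, g k ∘ g l = g (k + l) := by
    intro k l
    funext x
    simp only [Function.comp_apply, hgdef]
    set w := M x *ᵥ x with hw
    have hMu : M (x + ((l:ℝ)/2) • w) = M x + ((l:ℝ)/2) • M w := by
      rw [hlin.map_add, hlin.map_smul]
    have hxw : M x *ᵥ w = 0 := key x
    have hwx : M w *ᵥ x = 0 := by rw [← hsym]; exact key x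
    have hww : M w *ᵥ w = 0 := keyw x
    have hMuu : M (x + ((l:ℝ)/2) • w) *ᵥ (x + ((l:ℝ)/2) • w) = w := by
      rw [hMu]
      simp [Matrix.add_mulVec, Matrix.mulVec_add, Matrix.mulVec_smul,
        Matrix.smul_mulVec, hxw, hwx, hww, ← hw]
    rw [hMuu]
    push_cast
    module
  refine ⟨main, ?_⟩
  intro m
  induction m with
  | zero =>
      funext x
      simp [hgdef]
  | succ m ih =>
      rw [Function.iterate_succ', ih, main]
      push_cast; ring_nf
end

section
/- Let f be a quadratic shear on ℝ³ in standard form, f(x) = x + (1/2)M(x)x with M(x)²x ≡ 0 and f bijective. Then f has a nonzero fixed direction: there exists x₀ ≠ 0 with f(x₀) = x₀, i.e. M(x₀)x₀ = 0. -/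
open Matrix

lemma quadratic_shear_polarize
    (M : (Fin 3 → ℝ) → Matrix (Fin 3) (Fin 3) ℝ)
    (hlin : IsLinearMap ℝ M)
    (hshear : ∀ x : Fin 3 → ℝ, M x *ᵥ (M x *ᵥ x) = 0)
    (x y : Fin 3 → ℝ) :
    M y *ᵥ (M x *ᵥ x) + M x *ᵥ (M y *ᵥ x) + M x *ᵥ (M x *ᵥ y) = 0 := by
  have h1 := hshear (x + y)
  have h2 := hshear (x - y)
  have h3 := hshear y
  simp only [hlin.map_add, hlin.map_sub, Matrix.add_mulVec, Matrix.sub_mulVec,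
    Matrix.mulVec_add, Matrix.mulVec_sub] at h1 h2
  funext i
  have e1 := congrFun h1 i
  have e2 := congrFun h2 i
  have e3 := congrFun h3 i
  simp only [Pi.add_apply, Pi.sub_apply, Pi.zero_apply] at e1 e2 e3 ⊢
  linarith

/-- A quadratic shear on ℝ³ has a nonzero fixed point. -/
theorem quadratic_shear_fixed_direction
    (M : (Fin 3 → ℝ) → Matrix (Fin 3) (Fin 3) ℝ)
    (hlin : IsLinearMap ℝ M)
    (hsym : ∀ x y : Fin 3 → ℝ, M x *ᵥ y = M y *ᵥ x)
    (hshear : ∀ x : Fin 3 → ℝ, M x *ᵥ (M x *ᵥ x) = 0)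
    (f : (Fin 3 → ℝ) → Fin 3 → ℝ)
    (hf : ∀ x, f x = x + (1 / 2 : ℝ) • (M x *ᵥ x))
    (hbij : Function.Bijective f) :
    ∃ x₀ : Fin 3 → ℝ, x₀ ≠ 0 ∧ f x₀ = x₀ ∧ M x₀ *ᵥ x₀ = 0 := by
  -- key: Q(Q(x)) = 0 where Q x = M x *ᵥ x
  have key : ∀ x : Fin 3 → ℝ, M (M x *ᵥ x) *ᵥ (M x *ᵥ x) = 0 := by
    intro x
    have h := quadratic_shear_polarize M hlin hshear x (M x *ᵥ x)
    have t2 : M x *ᵥ (M (M x *ᵥ x) *ᵥ x) = 0 := by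
      rw [← hsym x (M x *ᵥ x), hshear x, Matrix.mulVec_zero]
    have t3 : M x *ᵥ (M x *ᵥ (M x *ᵥ x)) = 0 := by
      rw [hshear x, Matrix.mulVec_zero]
    rw [t2, t3, add_zero, add_zero] at h
    exact h
  by_cases h0 : ∀ x : Fin 3 → ℝ, M x *ᵥ x = 0
  · refine ⟨fun _ => 1, ?_, ?_, h0 _⟩
    · intro h
      have := congrFun h 0
      simp at this
    · rw [hf, h0, smul_zero, add_zero]
  · push_neg at h0
    obtain ⟨x, hx⟩ := h0
    refine ⟨M x *ᵥ x, hx, ?_, key x⟩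
    rw [hf, key x, smul_zero, add_zero]
end

section
/- Suppose f(x₀) = K x₀ for a nonzero x₀ ∈ ℝⁿ, K ∈ ℝ \ {0}, where f(x) = x + (1/2)M(x)x is a quadratic shear (so f⁻¹(y) = y − (1/2)M(y)y). Then K³ − K² − K + 1 = 0, hence K = 1 or K = −1. -/
open Matrix

/-- If a quadratic shear maps a nonzero `x₀` to `K x₀` with `K ≠ 0`, then
`K³ - K² - K + 1 = 0`, hence `K = 1` or `K = -1`. -/
theorem shear_eigenvalue_cubic (n : ℕ)
    (M : (Fin n → ℝ) → Matrix (Fin n) (Fin n) ℝ)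
    (hlin : IsLinearMap ℝ M)
    (hsym : ∀ x y : Fin n → ℝ, M x *ᵥ y = M y *ᵥ x)
    (hshear : ∀ x : Fin n → ℝ, M x *ᵥ (M x *ᵥ x) = 0)
    (f : (Fin n → ℝ) → Fin n → ℝ)
    (hf : ∀ x, f x = x + (1 / 2 : ℝ) • (M x *ᵥ x))
    (x₀ : Fin n → ℝ) (hx₀ : x₀ ≠ 0) (K : ℝ) (hK : K ≠ 0)
    (hfx : f x₀ = K • x₀) :
    K ^ 3 - K ^ 2 - K + 1 = 0 ∧ (K = 1 ∨ K = -1) := by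
  have h1 : M x₀ *ᵥ x₀ = (2 * (K - 1)) • x₀ := by
    have := hfx
    rw [hf] at this
    have h : (1 / 2 : ℝ) • (M x₀ *ᵥ x₀) = K • x₀ - x₀ := by
      rw [← this]; abel
    have h2 := congrArg (fun v => (2 : ℝ) • v) h
    simp only [smul_smul] at h2
    norm_num at h2
    rw [h2, smul_sub, smul_smul]
    module
  have h2 : (0 : Fin n → ℝ) = (2 * (K - 1))^2 • x₀ := by
    have := hshear x₀
    rw [h1, mulVec_smul, h1, smul_smul] at this
    rw [← this]; ring_nf
  have h3 : (2 * (K - 1))^2 = 0 := by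
    rcases smul_eq_zero.mp h2.symm with h | h
    · exact h
    · exact absurd h hx₀
  have hK1 : K = 1 := by
    have : K - 1 = 0 := by nlinarith [sq_nonneg (K - 1)]
    linarith
  subst hK1
  norm_num
end

section
/- Let S(x) = x + (1/2)M(x)x be a quadratic symplectic map of (ℝ^{2n}, ω) in standard form, where ω(v,v') = vᵀJv' is the standard symplectic form. Then M(x)ᵀJ = JᵀM(x) and M(x)ᵀJM(x) = 0 for all x, and consequently M(x)² = 0 for all x; hence S is a quadratic shear. -/
open Matrix

/-- A quadratic symplectic map in standard form satisfies `M(x)ᵀJ = JᵀM(x)`,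
`M(x)ᵀJM(x) = 0`, and hence `M(x)² = 0`: it is a quadratic shear. -/
theorem quadratic_symplectic_is_shear (n : ℕ)
    (M : (Fin n ⊕ Fin n → ℝ) → Matrix (Fin n ⊕ Fin n) (Fin n ⊕ Fin n) ℝ)
    (hlin : IsLinearMap ℝ M)
    (hsym : ∀ x y : Fin n ⊕ Fin n → ℝ, M x *ᵥ y = M y *ᵥ x)
    (J : Matrix (Fin n ⊕ Fin n) (Fin n ⊕ Fin n) ℝ)
    (hJ : J = Matrix.fromBlocks 0 1 (-1) 0)
    (hsymp : ∀ x : Fin n ⊕ Fin n → ℝ, (1 + M x)ᵀ * J * (1 + M x) = J) :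
    ∀ x : Fin n ⊕ Fin n → ℝ,
      (M x)ᵀ * J = Jᵀ * M x ∧ (M x)ᵀ * J * M x = 0 ∧ (M x) ^ 2 = 0 := by
  have hJT : Jᵀ = -J := by
    subst hJ
    simp [Matrix.fromBlocks_transpose, Matrix.fromBlocks_neg]
  have hJJ : J * J = -1 := by
    subst hJ
    simp [Matrix.fromBlocks_multiply, ← Matrix.fromBlocks_one, Matrix.fromBlocks_neg]
  have key : ∀ x, (M x)ᵀ * J + J * M x + (M x)ᵀ * J * M x = 0 := by
    intro x
    have h := hsymp x
    have h2 : (1 + M x)ᵀ * J * (1 + M x)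
        = J + ((M x)ᵀ * J + J * M x + (M x)ᵀ * J * M x) := by
      rw [Matrix.transpose_add, Matrix.transpose_one]
      noncomm_ring
    rw [h2] at h
    have := add_left_cancel (a := J) (b := (M x)ᵀ * J + J * M x + (M x)ᵀ * J * M x)
      (c := 0) (by rw [h, add_zero])
    exact this
  intro x
  have h1 := key x
  have h2 := key ((2:ℝ) • x)
  rw [hlin.map_smul] at h2
  simp only [Matrix.transpose_smul, smul_mul_assoc, Matrix.mul_smul, smul_smul] at h2
  norm_num at h2
  -- h2 : 2 • (AᵀJ) + 2 • (JA) + 4 • (AᵀJA) = 0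
  have hsum : (M x)ᵀ * J + J * M x = -((M x)ᵀ * J * M x) :=
    eq_neg_of_add_eq_zero_left h1
  have hB : (M x)ᵀ * J * M x = 0 := by
    have h3 : (2:ℝ) • ((M x)ᵀ * J + J * M x) + (4:ℝ) • ((M x)ᵀ * J * M x) = 0 := by
      rw [smul_add]; exact_mod_cast h2
    rw [hsum] at h3
    have h4 : (2:ℝ) • ((M x)ᵀ * J * M x) = 0 := by
      have : (2:ℝ) • -((M x)ᵀ * J * M x) + (4:ℝ) • ((M x)ᵀ * J * M x)
          = (2:ℝ) • ((M x)ᵀ * J * M x) := by module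
      rw [← this, h3]
    have h5 := congrArg (fun A => (2:ℝ)⁻¹ • A) h4
    simpa [smul_smul] using h5
  have hA : (M x)ᵀ * J = Jᵀ * M x := by
    rw [hJT, neg_mul]
    rw [hB, neg_zero] at hsum
    exact eq_neg_of_add_eq_zero_left hsum
  exact ⟨hA, hB, by
    have h6 : J * M x * M x = 0 := by
      have := hA
      rw [hJT, neg_mul] at this
      have h6' : (M x)ᵀ * J * M x = -(J * M x) * M x := by rw [← this]
      rw [hB] at h6'
      have := h6'.symm
      rwa [neg_mul, neg_eq_zero] at this
    have h7 : (-1 : Matrix (Fin n ⊕ Fin n) (Fin n ⊕ Fin n) ℝ) * (M x * M x) = 0 := by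
      calc (-1 : Matrix (Fin n ⊕ Fin n) (Fin n ⊕ Fin n) ℝ) * (M x * M x)
          = J * J * (M x * M x) := by rw [hJJ]
        _ = J * (J * M x * M x) := by noncomm_ring
        _ = J * 0 := by rw [h6]
        _ = 0 := Matrix.mul_zero J
    rw [neg_one_mul, neg_eq_zero] at h7
    rw [pow_two]; exact h7⟩
end

section
/- Let M : ℝ^{2n} → Mat(2n,ℝ) be linear with M(x)y = M(y)x and M(x)² = 0 for all x, and suppose M(x)ᵀJ = JᵀM(x) (symplectic compatibility). Define N = {y : M(x)y = 0 for all x}. Then the ω-orthogonal complement N^⊥ = {u : uᵀJy = 0 for all y ∈ N} is contained in N; in particular N is a coisotropic subspace. -/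
open Matrix

/-- For a symplectic quadratic shear, the null space
`N = {y : M(x)y = 0 for all x}` is coisotropic: `N^⊥ ⊆ N`. -/
theorem shear_null_space_coisotropic (n : ℕ)
    (M : (Fin n ⊕ Fin n → ℝ) → Matrix (Fin n ⊕ Fin n) (Fin n ⊕ Fin n) ℝ)
    (hlin : IsLinearMap ℝ M)
    (hsym : ∀ x y : Fin n ⊕ Fin n → ℝ, M x *ᵥ y = M y *ᵥ x)
    (hnil : ∀ x : Fin n ⊕ Fin n → ℝ, (M x) ^ 2 = 0)
    (J : Matrix (Fin n ⊕ Fin n) (Fin n ⊕ Fin n) ℝ)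
    (hJ : J = Matrix.fromBlocks 0 1 (-1) 0)
    (hcompat : ∀ x : Fin n ⊕ Fin n → ℝ, (M x)ᵀ * J = Jᵀ * M x)
    (N : Set (Fin n ⊕ Fin n → ℝ))
    (hN : N = {y | ∀ x : Fin n ⊕ Fin n → ℝ, M x *ᵥ y = 0}) :
    {u : Fin n ⊕ Fin n → ℝ | ∀ y ∈ N, u ⬝ᵥ (J *ᵥ y) = 0} ⊆ N := by
  -- Step 1: anticommutation from polarizing nilpotency
  have hanti : ∀ x y, M x * M y + M y * M x = 0 := by
    intro x y
    have hxy : M (x + y) = M x + M y := hlin.map_add x y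
    have h2 : (M x + M y) ^ 2 = 0 := by rw [← hxy]; exact hnil (x + y)
    have expand : (M x + M y) ^ 2 =
        M x ^ 2 + (M x * M y + M y * M x) + M y ^ 2 := by noncomm_ring
    rw [expand, hnil x, hnil y, zero_add, add_zero] at h2
    exact h2
  -- swap in first two arguments gives a sign
  have hsw : ∀ z x y, M z *ᵥ (M x *ᵥ y) = -(M x *ᵥ (M z *ᵥ y)) := by
    intro z x y
    have h := congrArg (fun A => A *ᵥ y) (hanti z x)
    simp only [add_mulVec, zero_mulVec, ← mulVec_mulVec] at h
    exact eq_neg_of_add_eq_zero_left h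
  -- swap in last two arguments is symmetric
  have hsy : ∀ z x y, M z *ᵥ (M x *ᵥ y) = M z *ᵥ (M y *ᵥ x) := by
    intro z x y; rw [hsym x y]
  -- Step 2: M z (M x y) = 0
  have hT : ∀ z x y, M z *ᵥ (M x *ᵥ y) = 0 := by
    intro z x y
    have chain : M z *ᵥ (M x *ᵥ y) = -(M z *ᵥ (M x *ᵥ y)) := by
      calc M z *ᵥ (M x *ᵥ y) = M z *ᵥ (M y *ᵥ x) := hsy z x y
        _ = -(M y *ᵥ (M z *ᵥ x)) := hsw z y x
        _ = -(M y *ᵥ (M x *ᵥ z)) := by rw [hsy y z x]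
        _ = -(-(M x *ᵥ (M y *ᵥ z))) := by rw [hsw y x z]
        _ = M x *ᵥ (M z *ᵥ y) := by rw [neg_neg, hsy x y z]
        _ = -(M z *ᵥ (M x *ᵥ y)) := by rw [hsw z x y] at *; rw [neg_neg]
    have : (2 : ℝ) • (M z *ᵥ (M x *ᵥ y)) = 0 := by
      rw [two_smul]; nth_rewrite 2 [chain]; simp
    simpa using (smul_eq_zero.mp this).resolve_left (by norm_num)
  -- range of M x is in N
  have hrange : ∀ x w, (M x *ᵥ w) ∈ N := by
    intro x w; rw [hN]; intro z; exact hT z x w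
  -- J basics
  have hJT : Jᵀ = -J := by
    rw [hJ]; simp [Matrix.fromBlocks_transpose, Matrix.fromBlocks_neg]
  have hJJT : J * Jᵀ = 1 := by
    rw [hJ]
    simp [Matrix.fromBlocks_transpose, Matrix.fromBlocks_multiply,
      Matrix.fromBlocks_one]
  -- main argument
  intro u hu
  rw [hN]
  intro x
  -- show (M x *ᵥ u) ⬝ᵥ (J *ᵥ w) = 0 for all w
  have key : ∀ w, (M x *ᵥ u) ⬝ᵥ (J *ᵥ w) = 0 := by
    intro w
    have h1 : (M x *ᵥ u) ⬝ᵥ (J *ᵥ w) = u ⬝ᵥ ((M x)ᵀ *ᵥ (J *ᵥ w)) := by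
      rw [dotProduct_comm, Matrix.dotProduct_mulVec,
        ← Matrix.mulVec_transpose]
      rw [dotProduct_comm, Matrix.dotProduct_mulVec,
        ← Matrix.mulVec_transpose, Matrix.transpose_transpose]
    rw [h1, mulVec_mulVec, hcompat x, hJT, Matrix.neg_mul, neg_mulVec,
      ← mulVec_mulVec]
    rw [dotProduct_neg, hu (M x *ᵥ w) (hrange x w), neg_zero]
  -- conclude M x *ᵥ u = 0 since J is invertible
  have hv : vecMul (M x *ᵥ u) J = 0 := by
    have h := key (vecMul (M x *ᵥ u) J)
    rw [Matrix.dotProduct_mulVec] at h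
    exact dotProduct_self_eq_zero.mp h
  have : vecMul (M x *ᵥ u) (J * Jᵀ) = 0 := by
    rw [← Matrix.vecMul_vecMul, hv, Matrix.zero_vecMul]
  rw [hJJT, Matrix.vecMul_one] at this
  exact this
end

section
/- Let f(x,y,z) = (α + τx − σy + z + Q(x,y), x, y) with Q(x,y) = ax² + bxy + cy², a = c, and a + b + c ≠ 0. Let η = (τ − σ)/(a+b+c) and define h(x,y,z) = −(z+η, y+η, x+η). Then h is an involution (h∘h = id) and h ∘ f = f⁻¹ ∘ h, i.e. h is a reversor for f. -/
/-- When `a = c` (and `a + b + c ≠ 0`), the normal form map is reversible with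
reversor `h(x,y,z) = -(z+η, y+η, x+η)`, `η = (τ-σ)/(a+b+c)`: `h` is an
involution and `h ∘ f = f⁻¹ ∘ h` (equivalently `f ∘ h ∘ f = h`). -/
theorem normal_form_reversor (α τ σ a b c : ℝ) (hac : a = c)
    (habc : a + b + c ≠ 0)
    (f h : ℝ × ℝ × ℝ → ℝ × ℝ × ℝ)
    (hf : ∀ p : ℝ × ℝ × ℝ, f p =
      (α + τ * p.1 - σ * p.2.1 + p.2.2 +
        (a * p.1 ^ 2 + b * p.1 * p.2.1 + c * p.2.1 ^ 2), p.1, p.2.1))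
    (hh : ∀ p : ℝ × ℝ × ℝ, h p =
      (-(p.2.2 + (τ - σ) / (a + b + c)), -(p.2.1 + (τ - σ) / (a + b + c)),
       -(p.1 + (τ - σ) / (a + b + c)))) :
    h ∘ h = id ∧ f ∘ h ∘ f = h := by
  constructor
  · funext p
    simp [hh, Function.comp]
  · funext p
    simp only [Function.comp, hf, hh]
    have hac' : c = a := hac.symm
    subst hac'
    refine Prod.ext ?_ (Prod.ext ?_ ?_) <;>
      simp only <;> field_simp <;> ring
end

section
/- Consider the recurrence x_{t+1} = α + τx_t − σx_{t-1} + x_{t-2} + Q(x_t, x_{t-1}) where Q(x,y) = ax² + bxy + cy² is positive definite (a > 0, c > 0, d := ac − b²/4 > 0). There exists κ > 0 (depending on α, τ, σ, a, b, c) such that if a trajectory satisfies |x_t| > κ and |x_t| ≥ max(|x_{t-1}|, |x_{t-2}|) for some t, then the sequence (x_{t+k})_{k≥0} is strictly increasing and tends to +∞. -/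
open Filter

lemma step_lemma (α τ σ a b c κ u v w : ℝ) (hc : 0 < c) (hd : 0 < a*c - b^2/4)
    (hκ1 : 1 ≤ κ) (hκ2 : c * (|τ| + |σ| + 1 + |α| + 2) ≤ (a*c - b^2/4) * κ)
    (hu : κ ≤ |u|) (hv : |v| ≤ |u|) (hw : |w| ≤ |u|) :
    |u| + 1 ≤ α + τ*u - σ*v + w + (a*u^2 + b*u*v + c*v^2) := by
  have hQ : (a*c - b^2/4) * u^2 ≤ c * (a*u^2 + b*u*v + c*v^2) := by
    nlinarith [sq_nonneg (2*c*v + b*u)]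
  have h1 : -(|τ| * |u|) ≤ τ * u := by
    have := neg_abs_le (τ * u); rwa [abs_mul] at this
  have h2 : σ * v ≤ |σ| * |u| := by
    calc σ * v ≤ |σ * v| := le_abs_self _
    _ = |σ| * |v| := abs_mul _ _
    _ ≤ |σ| * |u| := by exact mul_le_mul_of_nonneg_left hv (abs_nonneg _)
  have h3 : -|w| ≤ w := neg_abs_le w
  have h4 : -|α| ≤ α := neg_abs_le α
  have hsq : u^2 = |u| * |u| := (abs_mul_abs_self u).symm ▸ by rw [sq]
  have hu1 : 1 ≤ |u| := le_trans hκ1 hu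
  nlinarith [mul_le_mul_of_nonneg_right hκ2 (le_trans (by linarith) hu : (0:ℝ) ≤ |u|),
    mul_le_mul_of_nonneg_left hu (le_of_lt hd), abs_nonneg α, abs_nonneg u,
    mul_le_mul_of_nonneg_right hu1 (abs_nonneg α), hQ, sq_nonneg u,
    mul_le_mul_of_nonneg_right (mul_le_mul_of_nonneg_left hu hd.le) (abs_nonneg u)]

/-- For the third-difference recurrence with positive definite `Q`, there is a
`κ > 0` such that any trajectory with `|x_t| > κ` and
`|x_t| ≥ max(|x_{t-1}|, |x_{t-2}|)` is strictly increasing from time `t` on and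
tends to `+∞`. -/
theorem recurrence_escape (α τ σ a b c : ℝ)
    (ha : 0 < a) (hc : 0 < c) (hd : 0 < a * c - b ^ 2 / 4) :
    ∃ κ : ℝ, 0 < κ ∧
      ∀ x : ℕ → ℝ,
        (∀ t : ℕ, x (t + 3) = α + τ * x (t + 2) - σ * x (t + 1) + x t +
          (a * (x (t + 2)) ^ 2 + b * x (t + 2) * x (t + 1) + c * (x (t + 1)) ^ 2)) →
        ∀ t : ℕ, κ < |x (t + 2)| →
          max |x (t + 1)| |x t| ≤ |x (t + 2)| →
          StrictMono (fun k : ℕ => x (t + 2 + k)) ∧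
          Tendsto (fun k : ℕ => x (t + 2 + k)) atTop atTop := by
  set κ : ℝ := max 1 (c * (|τ| + |σ| + 1 + |α| + 2) / (a * c - b ^ 2 / 4)) with hκdef
  have hκ1 : (1 : ℝ) ≤ κ := le_max_left _ _
  have hκ2 : c * (|τ| + |σ| + 1 + |α| + 2) ≤ (a * c - b ^ 2 / 4) * κ := by
    have h := le_max_right 1 (c * (|τ| + |σ| + 1 + |α| + 2) / (a * c - b ^ 2 / 4))
    rw [div_le_iff₀ hd] at h
    calc c * (|τ| + |σ| + 1 + |α| + 2) ≤ κ * (a * c - b ^ 2 / 4) := h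
    _ = (a * c - b ^ 2 / 4) * κ := mul_comm _ _
  refine ⟨κ, lt_of_lt_of_le one_pos hκ1, ?_⟩
  intro x hx t h2 hmax
  -- the key invariant
  have key : ∀ k : ℕ, (κ ≤ |x (t + 2 + k)| ∧ |x (t + 1 + k)| ≤ |x (t + 2 + k)| ∧
      |x (t + k)| ≤ |x (t + 2 + k)|) ∧ |x (t + 2 + k)| + 1 ≤ x (t + 2 + k + 1) := by
    intro k
    induction k with
    | zero =>
      have hv : |x (t + 1)| ≤ |x (t + 2)| := le_trans (le_max_left _ _) hmax
      have hw : |x (t + 0)| ≤ |x (t + 2)| := le_trans (le_max_right _ _) hmax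
      refine ⟨⟨h2.le, by simpa using hv, hw⟩, ?_⟩
      have hrec := hx t
      have e : t + 2 + 0 + 1 = t + 3 := by omega
      rw [show t + 2 + 0 = t + 2 from by omega, e, hrec]
      exact step_lemma α τ σ a b c κ _ _ _ hc hd hκ1 hκ2 h2.le
        (by simpa using hv) hw
    | succ k ih =>
      obtain ⟨⟨hk1, hk2, hk3⟩, hstep⟩ := ih
      have hpos : 0 < x (t + 2 + k + 1) := by
        have := abs_nonneg (x (t + 2 + k)); linarith
      have habs : |x (t + 2 + k + 1)| = x (t + 2 + k + 1) := abs_of_pos hpos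
      have e1 : t + 2 + (k + 1) = t + 2 + k + 1 := by omega
      have e2 : t + 1 + (k + 1) = t + 2 + k := by omega
      have e3 : t + (k + 1) = t + 1 + k := by omega
      rw [e1, e2, e3]
      have H1 : κ ≤ |x (t + 2 + k + 1)| := by rw [habs]; linarith
      have H2 : |x (t + 2 + k)| ≤ |x (t + 2 + k + 1)| := by rw [habs]; linarith
      have H3 : |x (t + 1 + k)| ≤ |x (t + 2 + k + 1)| := le_trans hk2 H2
      refine ⟨⟨H1, H2, H3⟩, ?_⟩
      have hrec := hx (t + k + 1)
      have e4 : t + 2 + k + 1 + 1 = t + k + 1 + 3 := by omega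
      have e5 : t + 2 + k + 1 = t + k + 1 + 2 := by omega
      have e6 : t + 2 + k = t + k + 1 + 1 := by omega
      rw [e4, hrec, ← e5, ← e6, e5]
      have := step_lemma α τ σ a b c κ (x (t + 2 + k + 1)) (x (t + 2 + k))
        (x (t + 1 + k)) hc hd hκ1 hκ2 H1 H2 H3
      rw [e5] at this
      calc |x (t + k + 1 + 2)| + 1 = |x (t + 2 + k + 1)| + 1 := by rw [e5]
        _ ≤ _ := by
          have e7 : t + 1 + k = t + k + 1 := by omega
          rw [e7] at this
          convert this using 3 <;> rw [← e5] <;> rw [e6]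
  constructor
  · apply strictMono_nat_of_lt_succ
    intro k
    have := (key k).2
    have e1 : t + 2 + (k + 1) = t + 2 + k + 1 := by omega
    simp only [e1]
    have := le_abs_self (x (t + 2 + k))
    linarith [(key k).2]
  · have grow : ∀ k : ℕ, κ + k ≤ x (t + 2 + k + 1) := by
      intro k
      induction k with
      | zero =>
        have := (key 0).2
        have h0 := (key 0).1.1
        push_cast
        linarith
      | succ k ih =>
        have hs := (key (k + 1)).2
        have e1 : t + 2 + (k + 1) = t + 2 + k + 1 := by omega
        rw [e1] at hs
        rw [show t + 2 + (k + 1) + 1 = t + 2 + k + 1 + 1 from by omega]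
        have := le_abs_self (x (t + 2 + k + 1))
        push_cast
        push_cast at ih
        linarith
    rw [← tendsto_add_atTop_iff_nat 1]
    apply tendsto_atTop_mono (fun k => grow k)
    · exact tendsto_atTop_add_const_left atTop κ tendsto_natCast_atTop_atTop
end
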